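/- arXiv:2107.00871 — 3 statements merged into one kernel-verified Lean document; each statement's English description precedes it below -/
import Mathlib

section
/- Orthogonality of the m-projection: let p be a positive distribution, θ a CPT at node i, and q*(x) = p₋ᵢ(x)·θ(xᵢ,x) the m-projection of p onto E(θ). Then for every positive distribution r belonging to E(θ), Σ_x ( p(x) − q*(x) )·( log q*(x) − log r(x) ) = 0. -/
open Finset

variable {ι : Type} [Fintype ι] [DecidableEq ι] [Nonempty ι]
  {α : ι → Type} [∀ i, Fintype (α i)] [∀ i, DecidableEq (α i)] [∀ i, Nonempty (α i)]

/-- `p` is a probability distribution on the joint space `X = Π j, α j`. -/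
def IsDist (p : (∀ j, α j) → ℝ) : Prop :=
  (∀ x, 0 ≤ p x) ∧ ∑ x, p x = 1

/-- The `i`-marginal `p₋ᵢ(x) = Σ_{a ∈ α i} p(x[i↦a])`. -/
noncomputable def marg (p : (∀ j, α j) → ℝ) (i : ι) (x : ∀ j, α j) : ℝ :=
  ∑ a, p (Function.update x i a)

/-- The full conditional `p(xᵢ|x₋ᵢ) = p(x)/p₋ᵢ(x)`. -/
noncomputable def fullCond (p : (∀ j, α j) → ℝ) (i : ι) (x : ∀ j, α j) : ℝ :=
  p x / marg p i x

/-- `θ` is a conditional probability table (CPT) at node `i`. -/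
def IsCPT (i : ι) (θ : α i → (∀ j, α j) → ℝ) : Prop :=
  (∀ a x, 0 < θ a x) ∧ (∀ x, ∑ a, θ a x = 1) ∧
  (∀ a x (b : α i), θ a (Function.update x i b) = θ a x)

/-- `q` belongs to the full-conditional manifold `E(θ)`. -/
def memE (i : ι) (θ : α i → (∀ j, α j) → ℝ) (q : (∀ j, α j) → ℝ) : Prop :=
  ∀ x, q x = marg q i x * θ (x i) x

/-- Kullback–Leibler divergence. -/
noncomputable def KL (p q : (∀ j, α j) → ℝ) : ℝ :=
  ∑ x, p x * Real.log (p x / q x)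

/-! Since `r = r₋ᵢ·θ`, the factor `log q* − log r = log p₋ᵢ − log r₋ᵢ` does not depend on `xᵢ`,
while `p − q*` has vanishing `i`-marginal because `q*₋ᵢ = p₋ᵢ`; summing fibre by fibre over the
coordinate `i` therefore gives zero. -/

section Marginal

omit [Fintype ι] [Nonempty ι] [∀ i, DecidableEq (α i)] [∀ i, Nonempty (α i)]

noncomputable def mProj (i : ι) (θ : α i → (∀ j, α j) → ℝ) (p : (∀ j, α j) → ℝ)
    (x : ∀ j, α j) : ℝ :=
  marg p i x * θ (x i) x

variable {i : ι}

lemma marg_update (p : (∀ j, α j) → ℝ) (x : ∀ j, α j) (b : α i) :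
    marg p i (Function.update x i b) = marg p i x := by
  simp only [marg, Function.update_idem]

lemma marg_pos [Nonempty (α i)] {p : (∀ j, α j) → ℝ} (hp : ∀ x, 0 < p x) (x : ∀ j, α j) :
    0 < marg p i x :=
  sum_pos (fun _ _ => hp _) univ_nonempty

lemma marg_sub (p q : (∀ j, α j) → ℝ) (x : ∀ j, α j) :
    marg (fun y => p y - q y) i x = marg p i x - marg q i x :=
  sum_sub_distrib _ _

lemma marg_mul_of_update_eq {f g : (∀ j, α j) → ℝ}
    (hg : ∀ x (a : α i), g (Function.update x i a) = g x) (x : ∀ j, α j) :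
    marg (fun y => f y * g y) i x = marg f i x * g x := by
  simp only [marg, hg, sum_mul]

lemma marg_mProj {θ : α i → (∀ j, α j) → ℝ} (hθ : IsCPT i θ) (p : (∀ j, α j) → ℝ)
    (x : ∀ j, α j) : marg (mProj i θ p) i x = marg p i x := by
  simp only [marg, mProj, Function.update_idem, Function.update_self, hθ.2.2]
  rw [← mul_sum, hθ.2.1, mul_one]

end Marginal

section FibreSums

omit [Nonempty ι] [∀ i, DecidableEq (α i)] [∀ i, Nonempty (α i)]

variable {i : ι}

/-- `(x, a) ↦ (x[i↦a], xᵢ)` is an involution of `X × α i`, so summing all fibres counts every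
point `|α i|` times. -/
lemma sum_marg (f : (∀ j, α j) → ℝ) :
    ∑ x, marg f i x = Fintype.card (α i) * ∑ x, f x := by
  let swap : Equiv.Perm ((∀ j, α j) × α i) :=
    Function.Involutive.toPerm (fun xa => (Function.update xa.1 i xa.2, xa.1 i)) fun xa => by
      simp
  calc ∑ x, marg f i x = ∑ xa : (∀ j, α j) × α i, f (swap xa).1 := by
        rw [Fintype.sum_prod_type]; rfl
    _ = ∑ xa : (∀ j, α j) × α i, f xa.1 := Equiv.sum_comp swap fun xa => f xa.1
    _ = Fintype.card (α i) * ∑ x, f x := by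
        simp [Fintype.sum_prod_type, mul_sum]

lemma sum_mul_eq_zero_of_marg_eq_zero [Nonempty (α i)] {f g : (∀ j, α j) → ℝ}
    (hf : ∀ x, marg f i x = 0) (hg : ∀ x (a : α i), g (Function.update x i a) = g x) :
    ∑ x, f x * g x = 0 := by
  have hsum : (Fintype.card (α i) : ℝ) * ∑ x, f x * g x = 0 := by
    rw [← sum_marg]
    simp [marg_mul_of_update_eq hg, hf]
  exact (mul_eq_zero.mp hsum).resolve_left (Nat.cast_ne_zero.mpr Fintype.card_ne_zero)

end FibreSums

theorem mProjection_orthogonal_general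
    (i : ι) (θ : α i → (∀ j, α j) → ℝ) (hθ : IsCPT i θ)
    (p : (∀ j, α j) → ℝ) (hppos : ∀ x, 0 < p x)
    (r : (∀ j, α j) → ℝ) (hrpos : ∀ x, 0 < r x) (hrE : memE i θ r) :
    ∑ x, (p x - marg p i x * θ (x i) x) *
        (Real.log (marg p i x * θ (x i) x) - Real.log (r x)) = 0 := by
  have hlog : ∀ x, Real.log (mProj i θ p x) - Real.log (r x)
      = Real.log (marg p i x) - Real.log (marg r i x) := fun x => by
    rw [mProj, hrE x, Real.log_mul (marg_pos hppos x).ne' (hθ.1 _ x).ne',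
      Real.log_mul (marg_pos hrpos x).ne' (hθ.1 _ x).ne']
    ring
  change ∑ x, (p x - mProj i θ p x) * (Real.log (mProj i θ p x) - Real.log (r x)) = 0
  simp only [hlog]
  refine sum_mul_eq_zero_of_marg_eq_zero (i := i) (fun x => ?_) fun x a => ?_
  · rw [marg_sub, marg_mProj hθ, sub_self]
  · simp only [marg_update]

/-- orthogonality of the m-projection: for the m-projection
`q*(x) = p₋ᵢ(x)·θ(xᵢ,x)` of a positive distribution `p` onto `E(θ)` and every
positive distribution `r` in `E(θ)`,
`Σ_x (p(x) − q*(x))·(log q*(x) − log r(x)) = 0`. -/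
theorem mProjection_orthogonal
    (i : ι) (θ : α i → (∀ j, α j) → ℝ) (hθ : IsCPT i θ)
    (p : (∀ j, α j) → ℝ) (hp : IsDist p) (hppos : ∀ x, 0 < p x)
    (r : (∀ j, α j) → ℝ) (hr : IsDist r) (hrpos : ∀ x, 0 < r x) (hrE : memE i θ r) :
    ∑ x, (p x - marg p i x * θ (x i) x) *
        (Real.log (marg p i x * θ (x i) x) - Real.log (r x)) = 0 :=
  mProjection_orthogonal_general i θ hθ p hppos r hrpos hrE
end

section
/- Theorem 4, optimal CPT: let p be a positive distribution, i ∈ ι, S ⊆ ι with i ∉ S, and define θ̂ by θ̂(a,x) = p(a|x_S) (the conditional probability of Xᵢ = a given X_S = x_S under p). Then θ̂ is a CPT at node i depending only on the coordinates in S, and for every CPT θ at node i whose value θ(a,x) depends only on the coordinates of x in S, Σ_x p(x)·log( p(xᵢ|x₋ᵢ) / θ̂(xᵢ,x) ) ≤ Σ_x p(x)·log( p(xᵢ|x₋ᵢ) / θ(xᵢ,x) ). -/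
open Finset

variable {ι : Type} [Fintype ι] [DecidableEq ι] [Nonempty ι]
  {α : ι → Type} [∀ i, Fintype (α i)] [∀ i, DecidableEq (α i)] [∀ i, Nonempty (α i)]

/-- Restriction of `x` to the coordinates in `S`. -/
def restr (S : Finset ι) (x : ∀ j, α j) : ∀ j : S, α j :=
  fun j => x j

/-- Marginal of `p` on the coordinates in `S`: `p_S(y) = Σ_{x : x_S = y} p(x)`. -/
noncomputable def margS (p : (∀ j, α j) → ℝ) (S : Finset ι) (y : ∀ j : S, α j) : ℝ :=
  ∑ x, if restr S x = y then p x else 0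

/-- A canonical point of the joint space whose `S`-coordinates are `y`. -/
noncomputable def fill (S : Finset ι) (y : ∀ j : S, α j) : ∀ j, α j :=
  fun j => if h : j ∈ S then y ⟨j, h⟩ else Classical.arbitrary (α j)

/-- The conditional entropy
`H_p(Xᵢ|X_S) = −Σ_x p(x)·log( p_{S∪{i}}(x_{S∪{i}}) / p_S(x_S) )`;
`H_p(Xᵢ|X₋ᵢ)` is the case `S = Finset.univ.erase i`. -/
noncomputable def condEnt (p : (∀ j, α j) → ℝ) (i : ι) (S : Finset ι) : ℝ :=
  -∑ x, p x * Real.log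
    (margS p (insert i S) (restr (insert i S) x) / margS p S (restr S x))

/-- The conditional probability `p(a|y) = p_{S∪{i}}(y,a)/p_S(y)` of `Xᵢ = a`
given `X_S = y`, for `i ∉ S`. -/
noncomputable def condP (p : (∀ j, α j) → ℝ) (i : ι) (S : Finset ι)
    (y : ∀ j : S, α j) (a : α i) : ℝ :=
  margS p (insert i S) (restr (insert i S) (Function.update (fill S y) i a)) / margS p S y

/-- The optimal CPT `θ̂(a,x) = p(a|x_S) = p_{S∪{i}}(x_S,a)/p_S(x_S)`. -/
noncomputable def hatCPT (p : (∀ j, α j) → ℝ) (i : ι) (S : Finset ι)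
    (a : α i) (x : ∀ j, α j) : ℝ :=
  margS p (insert i S) (restr (insert i S) (Function.update x i a)) /
    margS p S (restr S x)

/-!
Write `θ̂` for `hatCPT p i S` and `G = θ(xᵢ,x)/θ̂(xᵢ,x)`. The two sums differ by `Σ_x p(x)·log G(x)`,
and `log G ≤ G - 1` bounds this by `Σ_x p(x)·G(x) - Σ_x p(x)`. Since `G` depends only on `x_{S∪{i}}`,
the tower property for conditioning on `X_S` replaces `G(x)` by its conditional expectation
`Σ_a θ̂(a,x)·G(x[i↦a]) = Σ_a θ(a,x) = 1`, so the bound is `0`.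
-/

open Function

set_option linter.unusedSectionVars false

section

variable {p : (∀ j, α j) → ℝ} {i : ι} {S : Finset ι}

lemma restr_eq_restr_iff {x x' : ∀ j, α j} :
    restr S x = restr S x' ↔ ∀ j ∈ S, x j = x' j := by
  simp [funext_iff, restr]

lemma restr_fill (S : Finset ι) (y : ∀ j : S, α j) : restr S (fill S y) = y :=
  funext fun j => dif_pos j.2

lemma margS_pos (hp : ∀ x, 0 < p x) (S : Finset ι) (y : ∀ j : S, α j) :
    0 < margS p S y := by
  refine sum_pos' (fun x _ => ?_) ⟨fill S y, mem_univ _, ?_⟩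
  · split_ifs
    exacts [(hp x).le, le_rfl]
  · rw [if_pos (restr_fill S y)]
    exact hp _

lemma restr_update_of_notMem (hiS : i ∉ S) (x : ∀ j, α j) (a : α i) :
    restr S (update x i a) = restr S x :=
  restr_eq_restr_iff.2 fun _ hj => update_of_ne (ne_of_mem_of_not_mem hj hiS) _ _

lemma restr_insert_eq_restr_insert_iff {x x' : ∀ j, α j} :
    restr (insert i S) x = restr (insert i S) x' ↔ x i = x' i ∧ restr S x = restr S x' := by
  simp only [restr_eq_restr_iff, forall_mem_insert]

lemma sum_fiber_insert_update (hiS : i ∉ S) (f : (∀ j, α j) → ℝ) (x : ∀ j, α j) :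
    ∑ a, ∑ x', (if restr (insert i S) x' = restr (insert i S) (update x i a) then f x' else 0) =
      ∑ x', if restr S x' = restr S x then f x' else 0 := by
  rw [sum_comm]
  refine sum_congr rfl fun x' _ => ?_
  simp only [restr_insert_eq_restr_insert_iff, update_self, restr_update_of_notMem hiS,
    and_comm (a := x' i = _), ite_and]
  split_ifs <;> simp

lemma sum_fiber_mul_eq_margS_mul (G : (∀ j, α j) → ℝ)
    (hG : ∀ x x', restr S x = restr S x' → G x = G x') (z : ∀ j, α j) :
    ∑ x, (if restr S x = restr S z then p x * G x else 0) = margS p S (restr S z) * G z := by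
  rw [margS, sum_mul]
  refine sum_congr rfl fun x _ => ?_
  split_ifs with h
  · rw [hG x z h]
  · rw [zero_mul]

lemma sum_mul_fiber_div_margS (hp : ∀ x, 0 < p x) (S : Finset ι) (F : (∀ j, α j) → ℝ) :
    ∑ x, p x * (∑ x', if restr S x' = restr S x then F x' else 0) / margS p S (restr S x) =
      ∑ x, F x := by
  simp_rw [mul_sum, sum_div]
  rw [sum_comm]
  refine sum_congr rfl fun x' _ => ?_
  have hterm : ∀ x, p x * (if restr S x' = restr S x then F x' else 0) / margS p S (restr S x) =
      (if restr S x = restr S x' then p x else 0) * (F x' / margS p S (restr S x')) := by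
    intro x
    by_cases h : restr S x = restr S x'
    · rw [if_pos h.symm, if_pos h, h]
      ring
    · rw [if_neg (Ne.symm h), if_neg h]
      ring
  rw [sum_congr rfl fun x _ => hterm x, ← sum_mul, ← margS,
    mul_div_cancel₀ _ (margS_pos hp S _).ne']

lemma hatCPT_isCPT (hp : ∀ x, 0 < p x) (hiS : i ∉ S) : IsCPT i (hatCPT p i S) := by
  refine ⟨fun a x => div_pos (margS_pos hp _ _) (margS_pos hp _ _), fun x => ?_, fun a x b => ?_⟩
  · simp only [hatCPT, ← sum_div, margS]
    rw [sum_fiber_insert_update hiS p x]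
    exact div_self (margS_pos hp S _).ne'
  · simp only [hatCPT, update_idem, restr_update_of_notMem hiS]

lemma hatCPT_congr (hiS : i ∉ S) (a : α i) {x x' : ∀ j, α j} (h : restr S x = restr S x') :
    hatCPT p i S a x = hatCPT p i S a x' := by
  have hT : restr (insert i S) (update x i a) = restr (insert i S) (update x' i a) := by
    rw [restr_insert_eq_restr_insert_iff, update_self, update_self,
      restr_update_of_notMem hiS, restr_update_of_notMem hiS]
    exact ⟨rfl, h⟩
  rw [hatCPT, hatCPT, hT, h]

lemma diag_congr_of_restr_insert_eq (φ : α i → (∀ j, α j) → ℝ)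
    (hφ : ∀ a x x', restr S x = restr S x' → φ a x = φ a x') {x x' : ∀ j, α j}
    (h : restr (insert i S) x = restr (insert i S) x') : φ (x i) x = φ (x' i) x' := by
  obtain ⟨hi, hS⟩ := restr_insert_eq_restr_insert_iff.1 h
  rw [hi, hφ _ _ _ hS]

lemma sum_mul_eq_sum_mul_sum_hatCPT (hp : ∀ x, 0 < p x) (hiS : i ∉ S) (G : (∀ j, α j) → ℝ)
    (hG : ∀ x x', restr (insert i S) x = restr (insert i S) x' → G x = G x') :
    ∑ x, p x * G x = ∑ x, p x * ∑ a, hatCPT p i S a x * G (update x i a) := by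
  have hcond : ∀ x, ∑ a, hatCPT p i S a x * G (update x i a) =
      (∑ x', if restr S x' = restr S x then p x' * G x' else 0) / margS p S (restr S x) := by
    intro x
    rw [← sum_fiber_insert_update hiS, sum_div]
    refine sum_congr rfl fun a _ => ?_
    rw [sum_fiber_mul_eq_margS_mul G hG, hatCPT]
    ring
  simp_rw [hcond, ← mul_div_assoc]
  exact (sum_mul_fiber_div_margS hp S _).symm

lemma sum_mul_div_hatCPT (hp : ∀ x, 0 < p x) (hiS : i ∉ S) {θ : α i → (∀ j, α j) → ℝ}
    (hθ : IsCPT i θ) (hθS : ∀ a x x', restr S x = restr S x' → θ a x = θ a x') :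
    ∑ x, p x * (θ (x i) x / hatCPT p i S (x i) x) = ∑ x, p x := by
  have hθ' : ∀ x x', restr (insert i S) x = restr (insert i S) x' →
      θ (x i) x / hatCPT p i S (x i) x = θ (x' i) x' / hatCPT p i S (x' i) x' := fun x x' h => by
    rw [diag_congr_of_restr_insert_eq θ hθS h,
      diag_congr_of_restr_insert_eq (hatCPT p i S) (fun a _ _ => hatCPT_congr hiS a) h]
  rw [sum_mul_eq_sum_mul_sum_hatCPT hp hiS _ hθ']
  refine sum_congr rfl fun x _ => ?_
  have hhat := hatCPT_isCPT hp hiS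
  have hterm : ∀ a, hatCPT p i S a x *
      (θ (update x i a i) (update x i a) / hatCPT p i S (update x i a i) (update x i a)) =
        θ a x := fun a => by
    rw [update_self, hθ.2.2, hhat.2.2]
    field_simp [(hhat.1 a x).ne']
  rw [sum_congr rfl fun a _ => hterm a, hθ.2.1, mul_one]

end

lemma sum_mul_log_nonpos {β : Type*} {s : Finset β} {w G : β → ℝ} (hw : ∀ b ∈ s, 0 ≤ w b)
    (hG : ∀ b ∈ s, 0 < G b) (hwG : ∑ b ∈ s, w b * G b = ∑ b ∈ s, w b) :
    ∑ b ∈ s, w b * Real.log (G b) ≤ 0 :=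
  calc ∑ b ∈ s, w b * Real.log (G b) ≤ ∑ b ∈ s, (w b * G b - w b) :=
        sum_le_sum fun b hb => by
          nlinarith [Real.log_le_sub_one_of_pos (hG b hb), hw b hb]
    _ = 0 := by rw [sum_sub_distrib, hwG, sub_self]

theorem optimal_CPT_general
    (p : (∀ j, α j) → ℝ) (hppos : ∀ x, 0 < p x)
    (i : ι) (S : Finset ι) (hiS : i ∉ S) :
    IsCPT i (hatCPT p i S) ∧
    (∀ a x x', restr S x = restr S x' → hatCPT p i S a x = hatCPT p i S a x') ∧
    (∀ θ : α i → (∀ j, α j) → ℝ, IsCPT i θ →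
      (∀ a x x', restr S x = restr S x' → θ a x = θ a x') →
      ∑ x, p x * Real.log (fullCond p i x / hatCPT p i S (x i) x) ≤
        ∑ x, p x * Real.log (fullCond p i x / θ (x i) x)) := by
  have hhat := hatCPT_isCPT hppos hiS
  refine ⟨hhat, fun a x x' => hatCPT_congr hiS a, fun θ hθ hθS => ?_⟩
  have hfullCond : ∀ x, fullCond p i x ≠ 0 := fun x =>
    (div_pos (hppos x) (sum_pos (fun a _ => hppos _) univ_nonempty)).ne'
  have hsplit : ∀ x, Real.log (fullCond p i x / hatCPT p i S (x i) x) =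
      Real.log (fullCond p i x / θ (x i) x) + Real.log (θ (x i) x / hatCPT p i S (x i) x) :=
    fun x => by
      have hθx := (hθ.1 (x i) x).ne'
      rw [← Real.log_mul (div_ne_zero (hfullCond x) hθx) (div_ne_zero hθx (hhat.1 _ _).ne'),
        div_mul_div_cancel₀ hθx]
  have hgibbs := sum_mul_log_nonpos (fun x _ => (hppos x).le)
    (fun x _ => div_pos (hθ.1 _ _) (hhat.1 _ _)) (sum_mul_div_hatCPT hppos hiS hθ hθS)
  simp_rw [hsplit, mul_add, sum_add_distrib]
  linarith

/-- Theorem 4, optimality of `θ̂`: `θ̂(a,x) = p(a|x_S)` is a CPT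
at node `i` depending only on the coordinates in `S`, and it minimizes
`Σ_x p(x)·log( p(xᵢ|x₋ᵢ)/θ(xᵢ,x) )` among all CPTs at node `i` depending only on
the coordinates in `S`. -/
theorem optimal_CPT
    (p : (∀ j, α j) → ℝ) (hp : IsDist p) (hppos : ∀ x, 0 < p x)
    (i : ι) (S : Finset ι) (hiS : i ∉ S) :
    IsCPT i (hatCPT p i S) ∧
    (∀ a x x', restr S x = restr S x' → hatCPT p i S a x = hatCPT p i S a x') ∧
    (∀ θ : α i → (∀ j, α j) → ℝ, IsCPT i θ →
      (∀ a x x', restr S x = restr S x' → θ a x = θ a x') →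
      ∑ x, p x * Real.log (fullCond p i x / hatCPT p i S (x i) x) ≤
        ∑ x, p x * Real.log (fullCond p i x / θ (x i) x)) :=
  optimal_CPT_general p hppos i S hiS
end

section
/- Generalized-input version of Theorem 4: let p be a positive distribution, i ∈ ι, β a finite nonempty type, and f : X → β a function with f(x) depending only on the coordinates of x other than i (f(x) = f(x[i↦b]) for all b). Define θ̂(a,x) = p(a|f = f(x)) := ( Σ_{x' : f(x') = f(x), x'ᵢ = a} p(x') ) / ( Σ_{x' : f(x') = f(x)} p(x') ). Then for every CPT θ at node i with θ(a,x) depending only on f(x) (i.e. f(x) = f(x') implies θ(a,x) = θ(a,x') for all a), Σ_x p(x)·log( p(xᵢ|x₋ᵢ)/θ̂(xᵢ,x) ) ≤ Σ_x p(x)·log( p(xᵢ|x₋ᵢ)/θ(xᵢ,x) ), and the left-hand side equals H_p(Xᵢ|f(X)) − H_p(Xᵢ|X₋ᵢ), where H_p(Xᵢ|f(X)) = −Σ_x p(x)·log θ̂(xᵢ,x). -/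
/-!
With `θ̂(a, x) = p(xᵢ = a | f = f x)`, splitting the logarithms reduces the claim to the Gibbs-type
inequality `Σ p log θ ≤ Σ p log θ̂`. By `log t ≤ t - 1` it suffices that
`Σₓ p(x) θ(xᵢ, x) / θ̂(xᵢ, x) = Σₓ p(x)`: sorting the sum by the fibres of `f` and, inside a fibre,
by the value `a` of `xᵢ`, the mass of `{xᵢ = a}` in the fibre cancels against the numerator of `θ̂`,
and the fibre contributes its total mass times `Σₐ θ(a, x) = 1`. Because `f` ignores coordinate `i`,
every value `a` occurs in every fibre, so `θ̂` is positive.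
-/

open Finset

variable {ι : Type} [Fintype ι] [DecidableEq ι] [Nonempty ι]
  {α : ι → Type} [∀ i, Fintype (α i)] [∀ i, DecidableEq (α i)] [∀ i, Nonempty (α i)]

set_option linter.unusedSectionVars false

open Real

section FiberConditional

variable {X A β : Type*} [Fintype X] [DecidableEq A] [DecidableEq β]

theorem sum_mul_log_div (p : X → ℝ) {q r : X → ℝ} (hq : ∀ x, q x ≠ 0) (hr : ∀ x, r x ≠ 0) :
    ∑ x, p x * log (q x / r x) = ∑ x, p x * log (q x) - ∑ x, p x * log (r x) := by
  rw [← sum_sub_distrib]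
  exact sum_congr rfl fun x _ ↦ by rw [log_div (hq x) (hr x), mul_sub]

theorem sum_mul_log_le_sum_mul_log {p q r : X → ℝ} (hp : ∀ x, 0 ≤ p x)
    (hq : ∀ x, 0 < q x) (hr : ∀ x, 0 < r x) (h : ∑ x, p x * (q x / r x) ≤ ∑ x, p x) :
    ∑ x, p x * log (q x) ≤ ∑ x, p x * log (r x) := by
  have hlog : ∑ x, p x * log (q x / r x) ≤ ∑ x, p x * (q x / r x) - ∑ x, p x := by
    rw [← sum_sub_distrib]
    gcongr with x
    rw [← mul_sub_one]
    exact mul_le_mul_of_nonneg_left (log_le_sub_one_of_pos (div_pos (hq x) (hr x))) (hp x)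
  rw [sum_mul_log_div p (fun x ↦ (hq x).ne') (fun x ↦ (hr x).ne')] at hlog
  linarith

theorem sum_ite_pos_of_exists {p : X → ℝ} (hp : ∀ x, 0 < p x) {P : X → Prop} [DecidablePred P]
    (hP : ∃ x, P x) : 0 < ∑ x, if P x then p x else 0 := by
  obtain ⟨x, hx⟩ := hP
  exact sum_pos' (fun y _ ↦ ite_nonneg (hp y).le le_rfl)
    ⟨x, mem_univ x, by rw [if_pos hx]; exact hp x⟩

noncomputable def fiberMass (p : X → ℝ) (f : X → β) (x : X) : ℝ :=
  ∑ x', if f x' = f x then p x' else 0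

noncomputable def jointFiberMass (p : X → ℝ) (f : X → β) (g : X → A) (a : A) (x : X) : ℝ :=
  ∑ x', if f x' = f x ∧ g x' = a then p x' else 0

/-- `p(g = a | f = f x)`; for `g x = x i` this is the paper's `θ̂(a, x)`. -/
noncomputable def fiberCond (p : X → ℝ) (f : X → β) (g : X → A) (a : A) (x : X) : ℝ :=
  jointFiberMass p f g a x / fiberMass p f x

variable {p : X → ℝ} {f : X → β} {g : X → A}

theorem jointFiberMass_congr (a : A) {x y : X} (h : f x = f y) :
    jointFiberMass p f g a x = jointFiberMass p f g a y := by
  simp only [jointFiberMass, h]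

theorem fiberCond_pos (hp : ∀ x, 0 < p x) (hsurj : ∀ x a, ∃ x', f x' = f x ∧ g x' = a)
    (a : A) (x : X) : 0 < fiberCond p f g a x :=
  div_pos (sum_ite_pos_of_exists hp (hsurj x a)) (sum_ite_pos_of_exists hp ⟨x, rfl⟩)

theorem sum_fiber_mul_eq_sum_jointFiberMass [Fintype A] (F : A → ℝ) (y : X) :
    ∑ x, (if f x = f y then p x * F (g x) else 0) = ∑ a, jointFiberMass p f g a y * F a := by
  simp_rw [jointFiberMass, sum_mul, ite_mul, zero_mul]
  rw [sum_comm]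
  refine sum_congr rfl fun x _ ↦ ?_
  split_ifs with h <;> simp [h]

theorem sum_mul_div_fiberCond [Fintype A] (hp : ∀ x, 0 < p x)
    (hsurj : ∀ x a, ∃ x', f x' = f x ∧ g x' = a) {θ : A → X → ℝ} (hθ : ∀ x, ∑ a, θ a x = 1)
    (hθf : ∀ a x y, f x = f y → θ a x = θ a y) :
    ∑ x, p x * (θ (g x) x / fiberCond p f g (g x) x) = ∑ x, p x := by
  have hN (a : A) (x : X) : jointFiberMass p f g a x ≠ 0 :=
    (sum_ite_pos_of_exists hp (hsurj x a)).ne'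
  calc ∑ x, p x * (θ (g x) x / fiberCond p f g (g x) x)
      = ∑ x, ∑ y, if f y = f x then p x * (θ (g x) x / jointFiberMass p f g (g x) x) * p y
          else 0 := by
        refine sum_congr rfl fun x _ ↦ ?_
        rw [fiberCond, div_div_eq_mul_div, mul_div_right_comm, ← mul_assoc, fiberMass, mul_sum]
        simp_rw [mul_ite, mul_zero]
    _ = ∑ y, ∑ x, if f x = f y then p x * (θ (g x) y / jointFiberMass p f g (g x) y) * p y
          else 0 := by
        rw [sum_comm]
        refine sum_congr rfl fun y _ ↦ sum_congr rfl fun x _ ↦ ?_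
        by_cases h : f x = f y
        · rw [if_pos h.symm, if_pos h, hθf _ _ _ h, jointFiberMass_congr _ h]
        · rw [if_neg (Ne.symm h), if_neg h]
    _ = ∑ y, (∑ a, jointFiberMass p f g a y * (θ a y / jointFiberMass p f g a y)) * p y := by
        simp_rw [← sum_fiber_mul_eq_sum_jointFiberMass, sum_mul, ite_mul, zero_mul]
    _ = ∑ y, p y := by
        simp_rw [mul_div_cancel₀ _ (hN _ _), hθ, one_mul]

theorem sum_mul_log_le_sum_mul_log_fiberCond [Fintype A] (hp : ∀ x, 0 < p x)
    (hsurj : ∀ x a, ∃ x', f x' = f x ∧ g x' = a) {θ : A → X → ℝ} (hθpos : ∀ a x, 0 < θ a x)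
    (hθ : ∀ x, ∑ a, θ a x = 1) (hθf : ∀ a x y, f x = f y → θ a x = θ a y) :
    ∑ x, p x * log (θ (g x) x) ≤ ∑ x, p x * log (fiberCond p f g (g x) x) :=
  sum_mul_log_le_sum_mul_log (fun x ↦ (hp x).le) (fun x ↦ hθpos _ x)
    (fun x ↦ fiberCond_pos hp hsurj _ x) (sum_mul_div_fiberCond hp hsurj hθ hθf).le

end FiberConditional

theorem fullCond_pos {p : (∀ j, α j) → ℝ} (hp : ∀ x, 0 < p x) (i : ι) (x : ∀ j, α j) :
    0 < fullCond p i x :=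
  div_pos (hp x) (sum_pos (fun _ _ ↦ hp _) ⟨x i, mem_univ _⟩)

theorem generalized_input_optimal_CPT_general
    (p : (∀ j, α j) → ℝ) (hppos : ∀ x, 0 < p x)
    (i : ι) (β : Type) [DecidableEq β]
    (f : (∀ j, α j) → β) (hf : ∀ x (b : α i), f (Function.update x i b) = f x) :
    (∀ θ : α i → (∀ j, α j) → ℝ, IsCPT i θ →
      (∀ (a : α i) (x x' : ∀ j, α j), f x = f x' → θ a x = θ a x') →
      ∑ x, p x * Real.log (fullCond p i x /
          ((∑ x', if f x' = f x ∧ x' i = (x i) then p x' else 0) /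
            (∑ x', if f x' = f x then p x' else 0))) ≤
        ∑ x, p x * Real.log (fullCond p i x / θ (x i) x)) ∧
    ∑ x, p x * Real.log (fullCond p i x /
        ((∑ x', if f x' = f x ∧ x' i = (x i) then p x' else 0) /
          (∑ x', if f x' = f x then p x' else 0))) =
      (-∑ x, p x * Real.log
          ((∑ x', if f x' = f x ∧ x' i = (x i) then p x' else 0) /
            (∑ x', if f x' = f x then p x' else 0))) -
      (-∑ x, p x * Real.log (fullCond p i x)) := by
  have hsurj (x : ∀ j, α j) (a : α i) : ∃ x', f x' = f x ∧ x' i = a :=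
    ⟨Function.update x i a, hf x a, Function.update_self ..⟩
  have hfc (x : ∀ j, α j) : fullCond p i x ≠ 0 := (fullCond_pos hppos i x).ne'
  have hcond (x : ∀ j, α j) : fiberCond p f (· i) (x i) x ≠ 0 :=
    (fiberCond_pos hppos hsurj _ x).ne'
  show (∀ θ, _ → _ → ∑ x, p x * log (fullCond p i x / fiberCond p f (· i) (x i) x) ≤ _) ∧
    ∑ x, p x * log (fullCond p i x / fiberCond p f (· i) (x i) x) =
      -∑ x, p x * log (fiberCond p f (· i) (x i) x) - _
  rw [sum_mul_log_div p hfc hcond]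
  refine ⟨fun θ hθ hθf ↦ ?_, by ring⟩
  rw [sum_mul_log_div p hfc fun x ↦ (hθ.1 _ x).ne']
  exact sub_le_sub_left (sum_mul_log_le_sum_mul_log_fiberCond hppos hsurj hθ.1 hθ.2.1 hθf) _

/-- generalized-input version of Theorem 4: for a generalized
input `f : X → β` not depending on coordinate `i`, the CPT
`θ̂(a,x) = p(a|f = f(x))` minimizes `Σ_x p(x)·log( p(xᵢ|x₋ᵢ)/θ(xᵢ,x) )` among CPTs
at node `i` depending only on `f(x)`, and the minimum value equals
`H_p(Xᵢ|f(X)) − H_p(Xᵢ|X₋ᵢ)` where `H_p(Xᵢ|f(X)) = −Σ_x p(x)·log θ̂(xᵢ,x)` and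
`H_p(Xᵢ|X₋ᵢ) = −Σ_x p(x)·log p(xᵢ|x₋ᵢ)`. -/
theorem generalized_input_optimal_CPT
    (p : (∀ j, α j) → ℝ) (hp : IsDist p) (hppos : ∀ x, 0 < p x)
    (i : ι) (β : Type) [Fintype β] [DecidableEq β] [Nonempty β]
    (f : (∀ j, α j) → β) (hf : ∀ x (b : α i), f (Function.update x i b) = f x) :
    (∀ θ : α i → (∀ j, α j) → ℝ, IsCPT i θ →
      (∀ (a : α i) (x x' : ∀ j, α j), f x = f x' → θ a x = θ a x') →
      ∑ x, p x * Real.log (fullCond p i x /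
          ((∑ x', if f x' = f x ∧ x' i = (x i) then p x' else 0) /
            (∑ x', if f x' = f x then p x' else 0))) ≤
        ∑ x, p x * Real.log (fullCond p i x / θ (x i) x)) ∧
    ∑ x, p x * Real.log (fullCond p i x /
        ((∑ x', if f x' = f x ∧ x' i = (x i) then p x' else 0) /
          (∑ x', if f x' = f x then p x' else 0))) =
      (-∑ x, p x * Real.log
          ((∑ x', if f x' = f x ∧ x' i = (x i) then p x' else 0) /
            (∑ x', if f x' = f x then p x' else 0))) -
      (-∑ x, p x * Real.log (fullCond p i x)) :=
  generalized_input_optimal_CPT_general p hppos i β f hf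
end
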